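/- Let E > 0 and let (P,L) ∈ ℝ³ × ℝ³ satisfy |P|² = 2E, P·L = 0 and L₃ = m. Define the invariants of the S¹ action: b₁ = P₃/√(2E), b₂ = L₁² + L₂², b₃ = (L₁P₂ - L₂P₁)/√(2E). Then the syzygy C₃(b₁,b₂,b₃) := (1 - b₁²) b₂ - b₁² m² - b₃² = 0 holds, together with the inequalities b₂ ≥ 0 and b₁² ≤ 1. Hence the image of the reduction map lies in the semi-algebraic variety P_m = {(b₁,b₂,b₃) : C₃ = 0, b₂ ≥ 0, b₁² ≤ 1}. -/

import Mathlib

noncomputable section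

def dot3 (v w : Fin 3 → ℝ) : ℝ := v 0 * w 0 + v 1 * w 1 + v 2 * w 2

lemma sq_two_le_dot3_self (v : Fin 3 → ℝ) : v 2 ^ 2 ≤ dot3 v v := by
  unfold dot3
  nlinarith [mul_self_nonneg (v 0), mul_self_nonneg (v 1)]

/-- By Lagrange's identity `(P₁² + P₂²)(L₁² + L₂²) - (L₁P₂ - L₂P₁)² = (P₁L₁ + P₂L₂)²`,
and orthogonality turns the right-hand side into `(P₃L₃)²`. -/
lemma syzygy_of_dot3_eq_zero {P L : Fin 3 → ℝ} (hPL : dot3 P L = 0) :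
    (dot3 P P - P 2 ^ 2) * (L 0 ^ 2 + L 1 ^ 2) - P 2 ^ 2 * L 2 ^ 2
      - (L 0 * P 1 - L 1 * P 0) ^ 2 = 0 := by
  unfold dot3 at *
  linear_combination (P 0 * L 0 + P 1 * L 1 - P 2 * L 2) * hPL

/-- On the reduced phase space `|P|² = 2E`, `P·L = 0` with `L₃ = m`, the invariants
`b₁ = P₃/√(2E)`, `b₂ = L₁² + L₂²`, `b₃ = (L₁P₂ - L₂P₁)/√(2E)` of the `S¹` action
satisfy the syzygy `C₃ = (1 - b₁²)b₂ - b₁²m² - b₃² = 0` together with `b₂ ≥ 0` and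
`b₁² ≤ 1`; hence the reduction map lands in the semi-algebraic variety `P_m`. -/
theorem reduction_syzygy (E m : ℝ) (hE : 0 < E) (P L : Fin 3 → ℝ)
    (hP : dot3 P P = 2 * E) (hPL : dot3 P L = 0) (hm : L 2 = m) :
    let b₁ : ℝ := P 2 / Real.sqrt (2 * E)
    let b₂ : ℝ := (L 0) ^ 2 + (L 1) ^ 2
    let b₃ : ℝ := (L 0 * P 1 - L 1 * P 0) / Real.sqrt (2 * E)
    (1 - b₁ ^ 2) * b₂ - b₁ ^ 2 * m ^ 2 - b₃ ^ 2 = 0 ∧ 0 ≤ b₂ ∧ b₁ ^ 2 ≤ 1 := by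
  intro b₁ b₂ b₃
  have hs_pos : 0 < Real.sqrt (2 * E) := by positivity
  have hs : Real.sqrt (2 * E) ^ 2 = dot3 P P := by rw [Real.sq_sqrt (by positivity), hP]
  refine ⟨?_, by positivity, ?_⟩
  · have key := syzygy_of_dot3_eq_zero hPL
    rw [← hs, hm] at key
    simp only [b₁, b₂, b₃, div_pow]
    field_simp
    linear_combination key
  · simp only [b₁, div_pow]
    rw [div_le_one (by positivity), hs]
    exact sq_two_le_dot3_self P
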